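/- Under the assumptions of the previous context (one-sided Lipschitz b with linear growth |b(x)| ≤ C'_b(1+|x|), Lipschitz σ, 𝒪 closed convex, ‖ḣ‖_{L²} ≤ N), any solution X^h(·,x) of the skeleton equation x' = b(x) + σ(x)ḣ − k with k in the normal cone satisfies sup_{t∈[0,T]} |X^h(t,x)| ≤ C(T, N, |x|) for a constant depending only on T, N, |x| and the constants of b and σ. -/

import Mathlib

/-!
Write `u t = X t - x = ∫₀ᵗ f` with `f = b(X) + σ(X) ḣ - k`. Since `u` is only absolutely
continuous, the chain rule `d‖u‖²/dt = 2⟪u', u⟫` is replaced by the energy identity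
`‖∫₀ᵗ f‖² = 2 ∫₀ᵗ ⟪f s, ∫₀ˢ f⟫ ds`, obtained from Fubini by cutting `[0,t]²` along the diagonal.
As `x ∈ O`, the reflection term contributes `-⟪k, X - x⟫ ≤ 0`, and the one-sided Lipschitz
bound on `b` and the Lipschitz bound on `σ` give `2⟪f, u⟫ ≤ g (1 + ‖u‖²)` with `g = a + c‖ḣ‖`,
and `∫₀ᵀ g ≤ aT + c(T + N²)/2`. Grönwall's lemma is proved by a bootstrap: on a time interval
carrying `g`-mass at most `1/2`, the continuous function `1 + ‖u‖²` at most doubles (compare it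
with its maximum there), so `1 + ‖u t‖² ≤ 2ⁿ` as soon as `∫₀ᵀ g ≤ n/2`.
-/

open Set MeasureTheory RealInnerProductSpace
open scoped NNReal

section EnergyIdentity

variable {μ : Measure ℝ}

theorem measure_prod_diagonal_eq_zero [SFinite μ] [NullSingletonClass μ] :
    (μ.prod μ) {p : ℝ × ℝ | p.1 = p.2} = 0 := by
  rw [Measure.prod_apply (measurableSet_eq_fun measurable_fst measurable_snd)]
  simp [Set.preimage, measure_singleton]

theorem integral_eq_two_smul_setIntegral_snd_le_of_swap [SFinite μ] [NullSingletonClass μ]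
    {E : Type*} [NormedAddCommGroup E] [NormedSpace ℝ E]
    {F : ℝ × ℝ → E} (hF : Integrable F (μ.prod μ)) (hsymm : ∀ p, F p.swap = F p) :
    ∫ p, F p ∂(μ.prod μ) = (2 : ℝ) • ∫ p in {p : ℝ × ℝ | p.2 ≤ p.1}, F p ∂(μ.prod μ) := by
  have hD : MeasurableSet {p : ℝ × ℝ | p.2 ≤ p.1} := measurableSet_le measurable_snd measurable_fst
  have hlt_ae_le : {p : ℝ × ℝ | p.2 < p.1} =ᵐ[μ.prod μ] {p : ℝ × ℝ | p.2 ≤ p.1} := by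
    have hoff : ∀ᵐ p ∂(μ.prod μ), p.1 ≠ p.2 :=
      measure_eq_zero_iff_ae_notMem.1 measure_prod_diagonal_eq_zero
    filter_upwards [hoff] with p hp
    exact propext ⟨le_of_lt, fun h => h.lt_of_ne hp.symm⟩
  have hswap : Prod.swap ⁻¹' {p : ℝ × ℝ | p.2 < p.1} = {p : ℝ × ℝ | p.2 ≤ p.1}ᶜ := by
    ext p; simp
  have hcompl : ∫ p in {p : ℝ × ℝ | p.2 ≤ p.1}ᶜ, F p ∂(μ.prod μ)
      = ∫ p in {p : ℝ × ℝ | p.2 ≤ p.1}, F p ∂(μ.prod μ) := by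
    calc ∫ p in {p : ℝ × ℝ | p.2 ≤ p.1}ᶜ, F p ∂(μ.prod μ)
        = ∫ p in Prod.swap ⁻¹' {p : ℝ × ℝ | p.2 < p.1}, F p.swap ∂(μ.prod μ) := by
          rw [hswap]; simp only [hsymm]
      _ = ∫ p in {p : ℝ × ℝ | p.2 < p.1}, F p ∂(μ.prod μ) :=
          Measure.measurePreserving_swap.setIntegral_preimage_emb
            MeasurableEquiv.prodComm.measurableEmbedding F _
      _ = _ := setIntegral_congr_set hlt_ae_le
  rw [← integral_add_compl hD hF, hcompl, two_smul]

variable {E : Type*} [NormedAddCommGroup E] [InnerProductSpace ℝ E] {f : ℝ → E}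

theorem integrable_inner_comp_prod (hf : Integrable f μ) :
    Integrable (fun p : ℝ × ℝ => ⟪f p.1, f p.2⟫) (μ.prod μ) := by
  refine (hf.norm.mul_prod hf.norm).mono ?_ (Filter.Eventually.of_forall fun p => ?_)
  · exact continuous_inner.comp_aestronglyMeasurable
      (hf.aestronglyMeasurable.comp_fst.prodMk hf.aestronglyMeasurable.comp_snd)
  · simpa only [Real.norm_eq_abs, norm_mul, abs_norm] using abs_real_inner_le_norm _ _

theorem setIntegral_Iic_restrict_Ioc_eq_intervalIntegral {a b s : ℝ} (hs : s ∈ Ioc a b) :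
    ∫ r in Iic s, f r ∂(volume.restrict (Ioc a b)) = ∫ r in a..s, f r := by
  rw [Measure.restrict_restrict measurableSet_Iic, intervalIntegral.integral_of_le hs.1.le,
    Iic_inter_Ioc_of_le hs.2]

variable [CompleteSpace E]

theorem integral_indicator_snd_le_inner (hf : Integrable f μ) (s : ℝ) :
    ∫ r, {p : ℝ × ℝ | p.2 ≤ p.1}.indicator (fun p => ⟪f p.1, f p.2⟫) (s, r) ∂μ
      = ⟪f s, ∫ r in Iic s, f r ∂μ⟫ := by
  have hslice : (fun r => {p : ℝ × ℝ | p.2 ≤ p.1}.indicator (fun p => ⟪f p.1, f p.2⟫) (s, r))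
      = (Iic s).indicator fun r => ⟪f s, f r⟫ := by
    ext r; by_cases h : r ≤ s <;> simp [h]
  rw [hslice, integral_indicator measurableSet_Iic, integral_inner hf.integrableOn]

theorem integrable_inner_setIntegral_Iic [SFinite μ] (hf : Integrable f μ) :
    Integrable (fun s => ⟪f s, ∫ r in Iic s, f r ∂μ⟫) μ := by
  simpa only [integral_indicator_snd_le_inner hf] using
    ((integrable_inner_comp_prod hf).indicator
      (measurableSet_le measurable_snd measurable_fst)).integral_prod_left

theorem norm_integral_sq_eq_two_mul_integral_inner_setIntegral_Iic [SFinite μ] [NullSingletonClass μ]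
    (hf : Integrable f μ) :
    ‖∫ s, f s ∂μ‖ ^ 2 = 2 * ∫ s, ⟪f s, ∫ r in Iic s, f r ∂μ⟫ ∂μ := by
  have hF := integrable_inner_comp_prod hf
  have hD : MeasurableSet {p : ℝ × ℝ | p.2 ≤ p.1} := measurableSet_le measurable_snd measurable_fst
  calc ‖∫ s, f s ∂μ‖ ^ 2 = ∫ p, ⟪f p.1, f p.2⟫ ∂(μ.prod μ) := by
        simp only [integral_prod _ hF, integral_inner hf, ← real_inner_self_eq_norm_sq]
        rw [← integral_inner hf]
        simp only [real_inner_comm]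
    _ = 2 * ∫ p in {p : ℝ × ℝ | p.2 ≤ p.1}, ⟪f p.1, f p.2⟫ ∂(μ.prod μ) :=
        integral_eq_two_smul_setIntegral_snd_le_of_swap hF fun p => real_inner_comm _ _
    _ = 2 * ∫ s, ⟪f s, ∫ r in Iic s, f r ∂μ⟫ ∂μ := by
        rw [← integral_indicator hD, integral_prod _ (hF.indicator hD)]
        simp only [integral_indicator_snd_le_inner hf]

theorem IntervalIntegrable.inner_intervalIntegral {a b : ℝ} (hab : a ≤ b)
    (hf : IntervalIntegrable f volume a b) :
    IntervalIntegrable (fun s => ⟪f s, ∫ r in a..s, f r⟫) volume a b := by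
  rw [intervalIntegrable_iff_integrableOn_Ioc_of_le hab] at hf ⊢
  refine (integrable_inner_setIntegral_Iic hf).congr ?_
  filter_upwards [ae_restrict_mem measurableSet_Ioc] with s hs
  rw [setIntegral_Iic_restrict_Ioc_eq_intervalIntegral hs]

theorem norm_intervalIntegral_sq_eq_two_mul_integral_inner {a b : ℝ} (hab : a ≤ b)
    (hf : IntervalIntegrable f volume a b) :
    ‖∫ s in a..b, f s‖ ^ 2 = 2 * ∫ s in a..b, ⟪f s, ∫ r in a..s, f r⟫ := by
  rw [intervalIntegrable_iff_integrableOn_Ioc_of_le hab] at hf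
  simp only [intervalIntegral.integral_of_le hab]
  rw [norm_integral_sq_eq_two_mul_integral_inner_setIntegral_Iic hf]
  congr 1
  refine integral_congr_ae ?_
  filter_upwards [ae_restrict_mem measurableSet_Ioc] with s hs
  rw [setIntegral_Iic_restrict_Ioc_eq_intervalIntegral hs, intervalIntegral.integral_of_le hs.1.le]

end EnergyIdentity

theorem intervalIntegral_le_mul_of_ae_le_mul {ψ g w : ℝ → ℝ} {a b S : ℝ} (hab : a ≤ b)
    (hψ : IntervalIntegrable ψ volume a b) (hg : IntervalIntegrable g volume a b)
    (hg0 : ∀ s, 0 ≤ g s) (hψg : ∀ᵐ s ∂(volume.restrict (Icc a b)), ψ s ≤ g s * w s)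
    (hS : ∀ s ∈ Icc a b, w s ≤ S) :
    ∫ s in a..b, ψ s ≤ S * ∫ s in a..b, g s := by
  rw [← intervalIntegral.integral_const_mul]
  refine intervalIntegral.integral_mono_ae_restrict hab hψ (hg.const_mul S) ?_
  filter_upwards [hψg, ae_restrict_mem measurableSet_Icc] with s hψs hs
  calc ψ s ≤ g s * w s := hψs
    _ ≤ S * g s := by rw [mul_comm S]; exact mul_le_mul_of_nonneg_left (hS s hs) (hg0 s)

section Bootstrap

variable {w G : ℝ → ℝ} {T : ℝ}

theorem one_sub_mul_le_of_sub_le_mul_sub (hw : ContinuousOn w (Icc 0 T))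
    (hw0 : ∀ t ∈ Icc 0 T, 0 ≤ w t) (hG : MonotoneOn G (Icc 0 T))
    (hstep : ∀ t₀ t₁ S, 0 ≤ t₀ → t₀ ≤ t₁ → t₁ ≤ T → (∀ s ∈ Icc t₀ t₁, w s ≤ S) →
      w t₁ - w t₀ ≤ S * (G t₁ - G t₀))
    {t₀ t₁ δ : ℝ} (ht₀ : 0 ≤ t₀) (ht₀₁ : t₀ ≤ t₁) (ht₁ : t₁ ≤ T) (hδ : G t₁ - G t₀ ≤ δ)
    (hδ₁ : δ ≤ 1) {t : ℝ} (ht : t ∈ Icc t₀ t₁) :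
    (1 - δ) * w t ≤ w t₀ := by
  have hsub : Icc t₀ t₁ ⊆ Icc 0 T := Icc_subset_Icc ht₀ ht₁
  obtain ⟨t', ht', hmax⟩ := isCompact_Icc.exists_isMaxOn (nonempty_Icc.2 ht₀₁) (hw.mono hsub)
  have hwt' : w t₀ ≤ w t' := hmax (left_mem_Icc.2 ht₀₁)
  have hGt' : G t' - G t₀ ≤ δ := by
    have := hG (hsub ht') (hsub (right_mem_Icc.2 ht₀₁)) ht'.2
    linarith
  have hinc := hstep t₀ t' (w t') ht₀ ht'.1 (ht'.2.trans ht₁) fun s hs =>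
    hmax (Icc_subset_Icc_right ht'.2 hs)
  have hw₀ := hw0 t₀ (hsub (left_mem_Icc.2 ht₀₁))
  calc (1 - δ) * w t ≤ (1 - δ) * w t' := mul_le_mul_of_nonneg_left (hmax ht) (by linarith)
    _ ≤ w t₀ := by nlinarith

theorem le_two_pow_mul_of_sub_le_mul_sub (hw : ContinuousOn w (Icc 0 T))
    (hw0 : ∀ t ∈ Icc 0 T, 0 ≤ w t) (hG : MonotoneOn G (Icc 0 T)) (hGc : ContinuousOn G (Icc 0 T))
    (hstep : ∀ t₀ t₁ S, 0 ≤ t₀ → t₀ ≤ t₁ → t₁ ≤ T → (∀ s ∈ Icc t₀ t₁, w s ≤ S) →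
      w t₁ - w t₀ ≤ S * (G t₁ - G t₀))
    (n : ℕ) {t : ℝ} (ht : t ∈ Icc 0 T) (hGt : G t - G 0 ≤ n / 2) :
    w t ≤ 2 ^ n * w 0 := by
  induction n generalizing t with
  | zero =>
    simpa using one_sub_mul_le_of_sub_le_mul_sub hw hw0 hG hstep le_rfl ht.1 ht.2
      (by simpa using hGt) zero_le_one (right_mem_Icc.2 ht.1)
  | succ n ih =>
    have hw₀ := hw0 0 (left_mem_Icc.2 (ht.1.trans ht.2))
    by_cases hGn : G t - G 0 ≤ n / 2
    · calc w t ≤ 2 ^ n * w 0 := ih ht hGn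
        _ ≤ 2 ^ (n + 1) * w 0 := by gcongr <;> norm_num
    · obtain ⟨t₀, ht₀, hGt₀⟩ := intermediate_value_Icc ht.1 (hGc.mono (Icc_subset_Icc_right ht.2))
        (show G 0 + n / 2 ∈ Icc (G 0) (G t) from ⟨le_add_of_nonneg_right (by positivity), by linarith⟩)
      have hwt₀ := ih ⟨ht₀.1, ht₀.2.trans ht.2⟩ (by linarith)
      have := one_sub_mul_le_of_sub_le_mul_sub hw hw0 hG hstep ht₀.1 ht₀.2 ht.2
        (δ := 1 / 2) (by push_cast at hGt; linarith) (by norm_num) (right_mem_Icc.2 ht₀.2)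
      rw [pow_succ]
      linarith

theorem one_add_le_two_pow_of_eq_intervalIntegral {φ ψ g : ℝ → ℝ}
    (hφ : ∀ t ∈ Icc 0 T, φ t = ∫ s in 0..t, ψ s) (hφ0 : ∀ t ∈ Icc 0 T, 0 ≤ φ t)
    (hψ : IntervalIntegrable ψ volume 0 T) (hg : IntervalIntegrable g volume 0 T)
    (hg0 : ∀ s, 0 ≤ g s) (hψg : ∀ᵐ s ∂(volume.restrict (Icc 0 T)), ψ s ≤ g s * (1 + φ s))
    {n : ℕ} (hn : ∫ s in 0..T, g s ≤ n / 2) {t : ℝ} (ht : t ∈ Icc 0 T) :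
    1 + φ t ≤ 2 ^ n := by
  have hT : uIcc 0 T = Icc 0 T := uIcc_of_le (ht.1.trans ht.2)
  have h0 : (0 : ℝ) ∈ Icc 0 T := left_mem_Icc.2 (ht.1.trans ht.2)
  have hsub : ∀ {f : ℝ → ℝ}, IntervalIntegrable f volume 0 T →
      ∀ {a b}, a ∈ Icc 0 T → b ∈ Icc 0 T → IntervalIntegrable f volume a b :=
    fun hf _ _ ha hb => hf.mono_set (uIcc_subset_uIcc (hT ▸ ha) (hT ▸ hb))
  have hincr : ∀ {f : ℝ → ℝ}, IntervalIntegrable f volume 0 T → ∀ {a b}, a ∈ Icc 0 T →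
      b ∈ Icc 0 T → (∫ s in 0..b, f s) - ∫ s in 0..a, f s = ∫ s in a..b, f s :=
    fun hf _ _ ha hb => intervalIntegral.integral_interval_sub_left (hsub hf h0 hb) (hsub hf h0 ha)
  have hprim : ∀ {f : ℝ → ℝ}, IntervalIntegrable f volume 0 T →
      ContinuousOn (fun t => ∫ s in 0..t, f s) (Icc 0 T) :=
    fun hf => hT ▸ intervalIntegral.continuousOn_primitive_interval ((intervalIntegrable_iff').1 hf)
  have hstep : ∀ t₀ t₁ S, 0 ≤ t₀ → t₀ ≤ t₁ → t₁ ≤ T → (∀ s ∈ Icc t₀ t₁, 1 + φ s ≤ S) →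
      1 + φ t₁ - (1 + φ t₀) ≤ S * ((∫ s in 0..t₁, g s) - ∫ s in 0..t₀, g s) := by
    intro t₀ t₁ S ht₀ ht₀₁ ht₁ hS
    have ht₀' : t₀ ∈ Icc 0 T := ⟨ht₀, ht₀₁.trans ht₁⟩
    have ht₁' : t₁ ∈ Icc 0 T := ⟨ht₀.trans ht₀₁, ht₁⟩
    rw [add_sub_add_left_eq_sub, hφ t₁ ht₁', hφ t₀ ht₀', hincr hψ ht₀' ht₁', hincr hg ht₀' ht₁']
    exact intervalIntegral_le_mul_of_ae_le_mul ht₀₁ (hsub hψ ht₀' ht₁') (hsub hg ht₀' ht₁') hg0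
      (ae_restrict_of_ae_restrict_of_subset (Icc_subset_Icc ht₀ ht₁) hψg) hS
  have hGmono : MonotoneOn (fun t => ∫ s in 0..t, g s) (Icc 0 T) := fun a ha b hb hab => by
    have := hincr hg ha hb
    have : 0 ≤ ∫ s in a..b, g s := intervalIntegral.integral_nonneg hab fun s _ => hg0 s
    dsimp only
    linarith
  have hwt := le_two_pow_mul_of_sub_le_mul_sub (w := fun t => 1 + φ t)
    (continuousOn_const.add ((hprim hψ).congr hφ)) (fun t ht => by linarith [hφ0 t ht])
    hGmono (hprim hg) hstep n ht ?_
  · simpa [hφ 0 h0] using hwt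
  · simpa using (hGmono ht ⟨ht.1.trans ht.2, le_rfl⟩ ht.2).trans hn

end Bootstrap

theorem two_mul_inner_drift_le {E F : Type*} [NormedAddCommGroup E] [InnerProductSpace ℝ E]
    [NormedAddCommGroup F] [NormedSpace ℝ F] {b : E → E} {σ : E → F →L[ℝ] E} {Cb : ℝ} {L : ℝ≥0}
    (hb : ∀ x y, ⟪x - y, b x - b y⟫ ≤ Cb * ‖x - y‖ ^ 2) (hσ : LipschitzWith L σ)
    (x y : E) (h : F) {k : E} (hk : 0 ≤ ⟪k, y - x⟫) :
    2 * ⟪b y + σ y h - k, y - x⟫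
      ≤ (2 * |Cb| + ‖b x‖ + (‖σ x‖ + 2 * L) * ‖h‖) * (1 + ‖y - x‖ ^ 2) := by
  set v := y - x
  have hdrift : ⟪b y - b x, v⟫ ≤ |Cb| * ‖v‖ ^ 2 := by
    rw [real_inner_comm]
    exact (hb y x).trans (mul_le_mul_of_nonneg_right (le_abs_self Cb) (sq_nonneg _))
  have hσy : ‖σ y‖ ≤ ‖σ x‖ + L * ‖v‖ := by
    have := hσ.dist_le_mul y x
    rw [dist_eq_norm, dist_eq_norm] at this
    linarith [norm_le_insert' (σ y) (σ x)]
  have hnoise : ⟪σ y h, v⟫ ≤ (‖σ x‖ + L * ‖v‖) * ‖h‖ * ‖v‖ :=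
    calc ⟪σ y h, v⟫ ≤ ‖σ y h‖ * ‖v‖ := real_inner_le_norm _ _
      _ ≤ ‖σ y‖ * ‖h‖ * ‖v‖ := by gcongr; exact (σ y).le_opNorm h
      _ ≤ (‖σ x‖ + L * ‖v‖) * ‖h‖ * ‖v‖ := by gcongr
  have hsplit : ⟪b y + σ y h - k, v⟫ = ⟪b y - b x, v⟫ + ⟪b x, v⟫ + ⟪σ y h, v⟫ - ⟪k, v⟫ := by
    simp only [inner_sub_left, inner_add_left]; ring
  have hamgm : 2 * ‖v‖ ≤ 1 + ‖v‖ ^ 2 := by nlinarith [sq_nonneg (‖v‖ - 1)]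
  have hsq : ‖v‖ ^ 2 ≤ 1 + ‖v‖ ^ 2 := by linarith
  have hbx := real_inner_le_norm (b x) v
  have h₁ := mul_le_mul_of_nonneg_left hamgm (norm_nonneg (b x))
  have h₂ := mul_le_mul_of_nonneg_left hamgm (mul_nonneg (norm_nonneg (σ x)) (norm_nonneg h))
  have h₃ := mul_le_mul_of_nonneg_left hsq (mul_nonneg (abs_nonneg Cb) zero_le_two)
  have h₄ := mul_le_mul_of_nonneg_left hsq (mul_nonneg L.coe_nonneg (norm_nonneg h))
  rw [hsplit]
  linarith

theorem intervalIntegrable_norm_of_memLp_two {E : Type*} [NormedAddCommGroup E] {f : ℝ → E}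
    {T : ℝ} (hT : 0 ≤ T) (hf : MemLp f 2 (volume.restrict (Icc 0 T))) :
    IntervalIntegrable (fun s => ‖f s‖) volume 0 T :=
  (intervalIntegrable_iff_integrableOn_Icc_of_le hT).2 (hf.integrable one_le_two).norm

theorem intervalIntegral_norm_le_of_memLp_two {E : Type*} [NormedAddCommGroup E] {f : ℝ → E}
    {T : ℝ} (hT : 0 ≤ T) (hf : MemLp f 2 (volume.restrict (Icc 0 T))) :
    ∫ s in 0..T, ‖f s‖ ≤ (T + ∫ s in 0..T, ‖f s‖ ^ 2) / 2 := by
  have hsq : IntervalIntegrable (fun s => ‖f s‖ ^ 2) volume 0 T :=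
    (intervalIntegrable_iff_integrableOn_Icc_of_le hT).2 hf.norm.integrable_sq
  calc ∫ s in 0..T, ‖f s‖ ≤ ∫ s in 0..T, (1 + ‖f s‖ ^ 2) / 2 :=
        intervalIntegral.integral_mono_on hT (intervalIntegrable_norm_of_memLp_two hT hf)
          ((intervalIntegrable_const.add hsq).div_const 2)
          fun s _ => by nlinarith [sq_nonneg (‖f s‖ - 1)]
    _ = (T + ∫ s in 0..T, ‖f s‖ ^ 2) / 2 := by
        rw [intervalIntegral.integral_div, intervalIntegral.integral_add intervalIntegrable_const hsq]
        simp

theorem skeleton_solution_apriori_bound_general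
    (m d : ℕ) (T N Cb Cσ : ℝ)
    (b : EuclideanSpace ℝ (Fin m) → EuclideanSpace ℝ (Fin m))
    (hb : ∀ x y, ⟪x - y, b x - b y⟫ ≤ Cb * ‖x - y‖ ^ 2)
    (σ : EuclideanSpace ℝ (Fin m) → (EuclideanSpace ℝ (Fin d) →L[ℝ] EuclideanSpace ℝ (Fin m)))
    (hσ : LipschitzWith (Real.toNNReal Cσ) σ)
    (O : Set (EuclideanSpace ℝ (Fin m)))
    (x : EuclideanSpace ℝ (Fin m)) (hxO : x ∈ O) :
    ∃ C : ℝ, ∀ (hdot : ℝ → EuclideanSpace ℝ (Fin d)),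
      MemLp hdot 2 (volume.restrict (Set.Icc (0:ℝ) T)) →
      (∫ s in (0:ℝ)..T, ‖hdot s‖ ^ 2) ≤ N ^ 2 →
      ∀ (X k : ℝ → EuclideanSpace ℝ (Fin m)),
      (∀ t ∈ Set.Icc 0 T, X t ∈ O) →
      IntervalIntegrable (fun s => b (X s) + σ (X s) (hdot s) - k s) volume 0 T →
      X 0 = x →
      (∀ t ∈ Set.Icc 0 T, X t = x + ∫ s in (0:ℝ)..t, (b (X s) + σ (X s) (hdot s) - k s)) →
      (∀ᵐ t ∂(volume.restrict (Set.Icc (0:ℝ) T)), ∀ z ∈ O, ⟪k t, X t - z⟫ ≥ 0) →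
      ∀ t ∈ Set.Icc 0 T, ‖X t‖ ≤ C := by
  set a := 2 * |Cb| + ‖b x‖
  set c := ‖σ x‖ + 2 * (Real.toNNReal Cσ : ℝ)
  set n := ⌈2 * (a * T + c * (T + N ^ 2) / 2)⌉₊
  refine ⟨‖x‖ + 2 ^ n, fun hdot hdot2 hN X k _ hf _ hX hk t ht => ?_⟩
  have hT : 0 ≤ T := ht.1.trans ht.2
  set f := fun s => b (X s) + σ (X s) (hdot s) - k s
  have hdisp : ∀ s ∈ Icc 0 T, ∫ r in 0..s, f r = X s - x := fun s hs => by
    rw [hX s hs, add_sub_cancel_left]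
  have hhdot := intervalIntegrable_norm_of_memLp_two hT hdot2
  have hg : IntervalIntegrable (fun s => a + c * ‖hdot s‖) volume 0 T :=
    intervalIntegrable_const.add (hhdot.const_mul c)
  have hgT : ∫ s in 0..T, (a + c * ‖hdot s‖) ≤ n / 2 := by
    rw [intervalIntegral.integral_add intervalIntegrable_const (hhdot.const_mul c),
      intervalIntegral.integral_const_mul, intervalIntegral.integral_const, sub_zero, smul_eq_mul]
    have := mul_le_mul_of_nonneg_left ((intervalIntegral_norm_le_of_memLp_two hT hdot2).trans
      (show _ ≤ (T + N ^ 2) / 2 by linarith)) (by positivity : 0 ≤ c)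
    linarith [Nat.le_ceil (2 * (a * T + c * (T + N ^ 2) / 2))]
  have henergy : ∀ s ∈ Icc 0 T,
      ‖X s - x‖ ^ 2 = ∫ r in 0..s, 2 * ⟪f r, ∫ q in 0..r, f q⟫ := fun s hs => by
    rw [← hdisp s hs, intervalIntegral.integral_const_mul,
      norm_intervalIntegral_sq_eq_two_mul_integral_inner hs.1
        (hf.mono_set (uIcc_subset_uIcc_left ((uIcc_of_le hT).symm ▸ hs)))]
  have hdrift : ∀ᵐ s ∂(volume.restrict (Icc 0 T)),
      2 * ⟪f s, ∫ r in 0..s, f r⟫ ≤ (a + c * ‖hdot s‖) * (1 + ‖X s - x‖ ^ 2) := by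
    filter_upwards [hk, ae_restrict_mem measurableSet_Icc] with s hks hs
    rw [hdisp s hs]
    exact two_mul_inner_drift_le hb hσ x (X s) (hdot s) (hks x hxO)
  have hgronwall := one_add_le_two_pow_of_eq_intervalIntegral henergy (fun _ _ => sq_nonneg _)
    ((hf.inner_intervalIntegral hT).const_mul 2) hg (fun s => by positivity) hdrift hgT ht
  calc ‖X t‖ ≤ ‖x‖ + ‖X t - x‖ := norm_le_insert' _ _
    _ ≤ ‖x‖ + 2 ^ n := by nlinarith [sq_nonneg (‖X t - x‖ - 1)]

/-- A priori bound for skeleton solutions, uniform over controls of `L²`-norm at most `N`. -/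
theorem skeleton_solution_apriori_bound
    (m d : ℕ) (T N Cb Cb' Cσ : ℝ) (hT : 0 < T) (hN : 0 < N)
    (b : EuclideanSpace ℝ (Fin m) → EuclideanSpace ℝ (Fin m)) (hbc : Continuous b)
    (hb : ∀ x y, ⟪x - y, b x - b y⟫ ≤ Cb * ‖x - y‖ ^ 2)
    (hbgrowth : ∀ x, ‖b x‖ ≤ Cb' * (1 + ‖x‖))
    (σ : EuclideanSpace ℝ (Fin m) → (EuclideanSpace ℝ (Fin d) →L[ℝ] EuclideanSpace ℝ (Fin m)))
    (hσ : LipschitzWith (Real.toNNReal Cσ) σ)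
    (O : Set (EuclideanSpace ℝ (Fin m))) (hne : O.Nonempty)
    (hclosed : IsClosed O) (hconv : Convex ℝ O)
    (x : EuclideanSpace ℝ (Fin m)) (hxO : x ∈ O) :
    ∃ C : ℝ, ∀ (hdot : ℝ → EuclideanSpace ℝ (Fin d)),
      MemLp hdot 2 (volume.restrict (Set.Icc (0:ℝ) T)) →
      (∫ s in (0:ℝ)..T, ‖hdot s‖ ^ 2) ≤ N ^ 2 →
      ∀ (X k : ℝ → EuclideanSpace ℝ (Fin m)),
      (∀ t ∈ Set.Icc 0 T, X t ∈ O) →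
      IntervalIntegrable (fun s => b (X s) + σ (X s) (hdot s) - k s) volume 0 T →
      X 0 = x →
      (∀ t ∈ Set.Icc 0 T, X t = x + ∫ s in (0:ℝ)..t, (b (X s) + σ (X s) (hdot s) - k s)) →
      (∀ᵐ t ∂(volume.restrict (Set.Icc (0:ℝ) T)), ∀ z ∈ O, ⟪k t, X t - z⟫ ≥ 0) →
      ∀ t ∈ Set.Icc 0 T, ‖X t‖ ≤ C :=
  skeleton_solution_apriori_bound_general m d T N Cb Cσ b hb σ hσ O x hxO
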